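/- arXiv:2509.00135 — 7 statements merged into one kernel-verified Lean document; each statement's English description precedes it below -/
import Mathlib

section
/- Let f be a non-decreasing submodular set function on a finite ground set V, let OPT ⊆ V have size k, and let S ⊆ V with |S| ≤ k. Let B ⊆ OPT \ S be a subset of size k − |S| maximizing f(B ∪ S) among all subsets of OPT \ S of that size. Then for any non-empty C ⊆ OPT \ S, we have f(C ∪ S) − f(S) ≤ ⌈|C| / |B|⌉ · (f(B ∪ S) − f(S)). -/
/-!
Write `g X = f (X ∪ S) - f S` for the gain of adding `X` to `S`. Submodularity makes `g`
subadditive, and by monotonicity and the maximality of `B` every `D ⊆ OPT \ S` with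
`|D| ≤ |B|` has `g D ≤ g B`. Cutting `C` into `⌈|C| / |B|⌉` pieces of size at most `|B|`
gives the bound.
-/

open Finset

section

variable {V : Type*} [DecidableEq V] {f : Finset V → ℝ}

theorem sub_le_sub_of_submodular (hmono : Monotone f)
    (hsub : ∀ (A B : Finset V) (e : V), A ⊆ B → e ∉ B →
      f (insert e B) - f B ≤ f (insert e A) - f A)
    (X : Finset V) {A B : Finset V} (hAB : A ⊆ B) :
    f (X ∪ B) - f B ≤ f (X ∪ A) - f A := by
  induction X using Finset.induction_on with
  | empty => simp
  | @insert a X ha ih =>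
    rw [insert_union, insert_union]
    by_cases haB : a ∈ B
    · rw [insert_eq_self.2 (mem_union_right _ haB)]
      linarith [hmono (subset_insert a (X ∪ A))]
    · have haXB : a ∉ X ∪ B := by simp [ha, haB]
      linarith [hsub (X ∪ A) (X ∪ B) a (union_subset_union_right hAB) haXB]

theorem union_gain_le_add_gain (hmono : Monotone f)
    (hsub : ∀ (A B : Finset V) (e : V), A ⊆ B → e ∉ B →
      f (insert e B) - f B ≤ f (insert e A) - f A)
    (S X Y : Finset V) :
    f (X ∪ Y ∪ S) - f S ≤ (f (X ∪ S) - f S) + (f (Y ∪ S) - f S) := by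
  have := sub_le_sub_of_submodular hmono hsub X (subset_union_right : S ⊆ Y ∪ S)
  rw [← union_assoc] at this
  linarith

end

theorem Finset.le_of_card_le_of_forall_card_eq {α : Type*} {g : Finset α → ℝ} (hg : Monotone g)
    {U : Finset α} {m : ℕ} {M : ℝ} (hm : m ≤ #U) (hmax : ∀ Z ⊆ U, #Z = m → g Z ≤ M)
    {D : Finset α} (hDU : D ⊆ U) (hD : #D ≤ m) : g D ≤ M := by
  obtain ⟨Z, hDZ, hZU, hZ⟩ := exists_subsuperset_card_eq hDU hD hm
  exact (hg hDZ).trans (hmax Z hZU hZ)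

theorem Finset.le_mul_of_card_le_mul {α : Type*} [DecidableEq α] {g : Finset α → ℝ}
    (hempty : g ∅ ≤ 0) (hadd : ∀ X Y, g (X ∪ Y) ≤ g X + g Y)
    {U : Finset α} {b : ℕ} {M : ℝ} (hM : ∀ D ⊆ U, #D ≤ b → g D ≤ M) (n : ℕ) :
    ∀ C ⊆ U, #C ≤ n * b → g C ≤ n * M := by
  induction n with
  | zero =>
    intro C _ hC
    simpa [card_eq_zero.1 (Nat.le_zero.1 (by simpa using hC))] using hempty
  | succ n ih =>
    intro C hCU hC
    obtain ⟨C₀, hC₀C, hC₀⟩ := exists_subset_card_eq (min_le_left #C b)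
    have hrest : #(C \ C₀) ≤ n * b := by
      rw [card_sdiff_of_subset hC₀C, hC₀]
      rw [Nat.succ_mul] at hC
      omega
    calc g C = g (C₀ ∪ C \ C₀) := by rw [union_sdiff_of_subset hC₀C]
      _ ≤ g C₀ + g (C \ C₀) := hadd _ _
      _ ≤ M + n * M :=
        add_le_add (hM C₀ (hC₀C.trans hCU) (hC₀ ▸ min_le_right _ _))
          (ih _ (sdiff_subset.trans hCU) hrest)
      _ = (n + 1 : ℕ) * M := by push_cast; ring

theorem card_le_natCeil_div_mul {c b : ℕ} (hb : 0 < b) : c ≤ ⌈(c : ℝ) / b⌉₊ * b := by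
  have hbR : (0 : ℝ) < b := by exact_mod_cast hb
  exact_mod_cast (div_le_iff₀ hbR).1 (Nat.le_ceil ((c : ℝ) / b))

theorem exchange_lemma_general
    {V : Type*} [DecidableEq V]
    (f : Finset V → ℝ)
    (hmono : ∀ A B : Finset V, A ⊆ B → f A ≤ f B)
    (hsub : ∀ (A B : Finset V) (e : V), A ⊆ B → e ∉ B →
      f (insert e B) - f B ≤ f (insert e A) - f A)
    (k : ℕ) (OPT S B : Finset V)
    (hBsub : B ⊆ OPT \ S) (hBcard : B.card = k - S.card) (hBpos : 1 ≤ B.card)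
    (hBmax : ∀ Z ⊆ OPT \ S, Z.card = k - S.card → f (Z ∪ S) ≤ f (B ∪ S))
    (C : Finset V) (hC : C ⊆ OPT \ S) :
    f (C ∪ S) - f S ≤ (⌈(C.card : ℝ) / (B.card : ℝ)⌉ : ℝ) * (f (B ∪ S) - f S) := by
  have hf : Monotone f := fun A B h => hmono A B h
  set g : Finset V → ℝ := fun X => f (X ∪ S) - f S
  have hpiece : ∀ D ⊆ OPT \ S, #D ≤ #B → g D ≤ g B := fun D hD hDB =>
    sub_le_sub_right
      (le_of_card_le_of_forall_card_eq (fun X Y h => hf (union_subset_union_left h))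
        (hBcard ▸ card_le_card hBsub) hBmax hD (hBcard ▸ hDB)) _
  have hbound := le_mul_of_card_le_mul (g := g) (by simp [g])
    (union_gain_le_add_gain hf hsub S) hpiece ⌈(#C : ℝ) / #B⌉₊ C hC
    (card_le_natCeil_div_mul hBpos)
  rwa [natCast_ceil_eq_intCast_ceil (by positivity)] at hbound

/-- exchange lemma. If `B ⊆ OPT \ S` of size `k − |S| ≥ 1` maximizes
`f(B ∪ S)` among all such subsets, then for any nonempty `C ⊆ OPT \ S`,
`f(C ∪ S) − f(S) ≤ ⌈|C|/|B|⌉ · (f(B ∪ S) − f(S))`. -/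
theorem exchange_lemma
    {V : Type*} [Fintype V] [DecidableEq V]
    (f : Finset V → ℝ)
    (hmono : ∀ A B : Finset V, A ⊆ B → f A ≤ f B)
    (hsub : ∀ (A B : Finset V) (e : V), A ⊆ B → e ∉ B →
      f (insert e B) - f B ≤ f (insert e A) - f A)
    (k : ℕ) (OPT S B : Finset V)
    (hOPT : OPT.card = k) (hS : S.card ≤ k)
    (hBsub : B ⊆ OPT \ S) (hBcard : B.card = k - S.card) (hBpos : 1 ≤ B.card)
    (hBmax : ∀ Z ⊆ OPT \ S, Z.card = k - S.card → f (Z ∪ S) ≤ f (B ∪ S))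
    (C : Finset V) (hC : C ⊆ OPT \ S) (hCne : C.Nonempty) :
    f (C ∪ S) - f S ≤ (⌈(C.card : ℝ) / (B.card : ℝ)⌉ : ℝ) * (f (B ∪ S) - f S) :=
  exchange_lemma_general f hmono hsub k OPT S B hBsub hBcard hBpos hBmax C hC
end

section
/- Type-count characterization: for any b ∈ ℕ, the multiset of types of any σ-type feasible selection of size b equals the multiset of entries of the min-ratio type sequence s(b,b); consequently, the multiset of types of a σ-type feasible selection of size b is unique. -/
open Finset
open scoped Classical

section

variable {V : Type*} [Fintype V] [DecidableEq V] {r : ℕ}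

/-- Number of elements of `S` of type `q`. -/
def typeCnt (type : V → Fin r) (S : Finset V) (q : Fin r) : ℕ :=
  (S.filter (fun e => type e = q)).card

/-- Satisfaction ratio of `S` at type `q`. -/
noncomputable def ratio (p : Fin r → ℝ) (type : V → Fin r) (S : Finset V) (q : Fin r) : ℝ :=
  (typeCnt type S q : ℝ) / (p q * S.card)

/-- Minimum satisfaction ratio `α_min(S)`. -/
noncomputable def alphaMin [NeZero r] (p : Fin r → ℝ) (type : V → Fin r) (S : Finset V) : ℝ :=
  Finset.univ.inf' Finset.univ_nonempty (fun q => ratio p type S q)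

/-- The set `Q(S)` of types attaining the minimum satisfaction ratio. -/
noncomputable def minTypes [NeZero r] (p : Fin r → ℝ) (type : V → Fin r) (S : Finset V) :
    Finset (Fin r) :=
  Finset.univ.filter (fun q => ratio p type S q = alphaMin p type S)

/-- A size-`b` set `S` is `σ`-type feasible. -/
noncomputable def SigmaTypeFeasible [NeZero r] (p : Fin r → ℝ) (type : V → Fin r)
    (σ : Fin r → Fin r) (b : ℕ) (S : Finset V) : Prop :=
  S.card = b ∧
  (∀ A : Finset V, A.card = b → alphaMin p type A ≤ alphaMin p type S) ∧
  (∀ A : Finset V, A.card = b → alphaMin p type A = alphaMin p type S →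
    (minTypes p type S).card ≤ (minTypes p type A).card) ∧
  (∀ A : Finset V, A.card = b → alphaMin p type A = alphaMin p type S →
    (minTypes p type A).card = (minTypes p type S).card →
    ¬ ∃ q q' : Fin r, σ q < σ q' ∧ typeCnt type S q < typeCnt type A q ∧
      typeCnt type A q' < typeCnt type S q')

/-- Occurrences of `q` among the first `n` entries of the sequence `s`. -/
def seqCount (s : ℕ → Fin r) (q : Fin r) (n : ℕ) : ℕ :=
  ((Finset.range n).filter (fun i => s i = q)).card

/-- `s` is a min-ratio type sequence with denominator `d`: the appended type
minimizes `#(q,prefix)/(p q · d)`, breaking ties by smaller `σ`-value. -/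
def IsMinRatioSeq (p : Fin r → ℝ) (σ : Fin r → Fin r) (d : ℕ) (s : ℕ → Fin r) : Prop :=
  ∀ n : ℕ, ∀ q : Fin r,
    (seqCount s (s n) n : ℝ) / (p (s n) * d) < (seqCount s q n : ℝ) / (p q * d) ∨
    ((seqCount s (s n) n : ℝ) / (p (s n) * d) = (seqCount s q n : ℝ) / (p q * d) ∧
      σ (s n) ≤ σ q)

/-! Let `a q` be the number of `q`'s in `s(b,b)`. Removing one element of any type `q` from the
greedy counts leaves `q` a `σ`-first minimiser of the ratio, and `a` is realised by some selection
`A` since every type has `b` elements. Let `n` be the type counts of a feasible `S`. For every `q`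
with `n q < a q` we get `α_min(S) ≤ n q / (p q b) ≤ (a q - 1) / (p q b) ≤ α_min(A)`, so maximality
of `α_min(S)` makes this a chain of equalities: `q` lacks exactly one element, lies in `Q(S)` but
not in `Q(A)`, and `σ`-precedes every type of `Q(A)`. As all deficits are `1`, at most as many types
have a surplus as have a deficit, hence `|Q(A)| ≤ |Q(S)|`; minimality of `|Q(S)|` forces equality,
and with it a surplus type `q' ∈ Q(A)`. If `n ≠ a` there is a deficit type `q`, and then
`σ q < σ q'` violates the `σ`-tie-breaking condition. -/

section MinRatio

variable {ι κ : Type*} [Fintype ι]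

theorem exists_lt_of_sum_eq_of_ne {n a : ι → ℕ} (hsum : ∑ q, n q = ∑ q, a q)
    (hne : n ≠ a) : ∃ q, n q < a q := by
  by_contra! h
  exact hne <| funext fun q =>
    ((sum_eq_sum_iff_of_le fun q _ => h q).1 hsum.symm q (mem_univ q)).symm

theorem card_filter_lt_le_card_filter_lt {n a : ι → ℕ} (hsum : ∑ q, n q = ∑ q, a q)
    (hstep : ∀ q, n q < a q → a q = n q + 1) :
    #{q | a q < n q} ≤ #{q | n q < a q} := by
  have htrunc : ∑ q, (n q - a q) + ∑ q, a q = ∑ q, (a q - n q) + ∑ q, n q := by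
    rw [← sum_add_distrib, ← sum_add_distrib]
    exact sum_congr rfl fun q _ => by omega
  calc #{q | a q < n q} = ∑ q, if a q < n q then 1 else 0 := card_filter _ _
    _ ≤ ∑ q, (n q - a q) := sum_le_sum fun q _ => by split_ifs <;> omega
    _ = ∑ q, (a q - n q) := by omega
    _ = ∑ q, if n q < a q then 1 else 0 := sum_congr rfl fun q _ => by
        split_ifs with h
        · have := hstep q h; omega
        · omega
    _ = #{q | n q < a q} := (card_filter _ _).symm

theorem cast_le_sub_one_of_lt {m k : ℕ} (h : m < k) : (m : ℝ) ≤ k - 1 :=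
  le_sub_iff_add_le.2 (by exact_mod_cast h)

variable [Nonempty ι] [LinearOrder κ]

noncomputable def minRatio (c : ι → ℝ) (x : ι → ℕ) : ℝ :=
  univ.inf' univ_nonempty fun q => (x q : ℝ) / c q

noncomputable def minRatioSet (c : ι → ℝ) (x : ι → ℕ) : Finset ι :=
  univ.filter fun q => (x q : ℝ) / c q = minRatio c x

/-- After removing one element of any type `q` present in `a`, the greedy rule (minimise
`a q' / c q'`, ties to the smaller `σ q'`) would pick `q` again. -/
def IsGreedyCount (c : ι → ℝ) (σ : ι → κ) (a : ι → ℕ) : Prop :=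
  ∀ q q', 0 < a q → ((a q : ℝ) - 1) / c q < a q' / c q' ∨
    (((a q : ℝ) - 1) / c q = a q' / c q' ∧ σ q ≤ σ q')

theorem minRatio_le (c : ι → ℝ) (x : ι → ℕ) (q : ι) : minRatio c x ≤ x q / c q :=
  inf'_le _ (mem_univ q)

theorem mem_minRatioSet {c : ι → ℝ} {x : ι → ℕ} {q : ι} :
    q ∈ minRatioSet c x ↔ (x q : ℝ) / c q = minRatio c x := by
  simp [minRatioSet]

namespace IsGreedyCount

variable {c : ι → ℝ} {σ : ι → κ} {n a : ι → ℕ} {q q' : ι}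

theorem pred_div_le_minRatio (ha : IsGreedyCount c σ a) (hq : 0 < a q) :
    ((a q : ℝ) - 1) / c q ≤ minRatio c a :=
  le_inf' _ _ fun q' _ => (ha q q' hq).elim le_of_lt fun h => h.1.le

theorem div_le_minRatio_of_lt (hc : ∀ q, 0 ≤ c q) (ha : IsGreedyCount c σ a) (h : n q < a q) :
    (n q : ℝ) / c q ≤ minRatio c a :=
  (div_le_div_of_nonneg_right (cast_le_sub_one_of_lt h) (hc q)).trans
    (ha.pred_div_le_minRatio (by omega))

theorem minRatio_le_minRatio (hc : ∀ q, 0 ≤ c q) (ha : IsGreedyCount c σ a)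
    (hsum : ∑ q, n q = ∑ q, a q) : minRatio c n ≤ minRatio c a := by
  by_cases hne : n = a
  · rw [hne]
  obtain ⟨q, hq⟩ := exists_lt_of_sum_eq_of_ne hsum hne
  exact (minRatio_le c n q).trans (ha.div_le_minRatio_of_lt hc hq)

/-- With equal minimum ratios, the chain
`minRatio c n ≤ n q / c q ≤ (a q - 1) / c q ≤ minRatio c a` collapses. -/
theorem div_eq_minRatio_of_lt (hc : ∀ q, 0 ≤ c q) (ha : IsGreedyCount c σ a)
    (hα : minRatio c a = minRatio c n) (h : n q < a q) :
    (n q : ℝ) / c q = minRatio c n ∧ ((a q : ℝ) - 1) / c q = minRatio c n := by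
  have hn := minRatio_le c n q
  have hna := div_le_div_of_nonneg_right (cast_le_sub_one_of_lt h) (hc q)
  have ha' := ha.pred_div_le_minRatio (by omega : 0 < a q)
  constructor <;> linarith

theorem add_one_eq_of_lt (hc : ∀ q, 0 < c q) (ha : IsGreedyCount c σ a)
    (hα : minRatio c a = minRatio c n) (h : n q < a q) : n q + 1 = a q := by
  obtain ⟨hn, ha'⟩ := ha.div_eq_minRatio_of_lt (fun q => (hc q).le) hα h
  have : (n q : ℝ) = a q - 1 := (div_left_inj' (hc q).ne').1 (hn.trans ha'.symm)
  exact_mod_cast (by linarith : (n q : ℝ) + 1 = a q)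

theorem mem_minRatioSet_of_lt (hc : ∀ q, 0 ≤ c q) (ha : IsGreedyCount c σ a)
    (hα : minRatio c a = minRatio c n) (h : n q < a q) : q ∈ minRatioSet c n :=
  mem_minRatioSet.2 (ha.div_eq_minRatio_of_lt hc hα h).1

theorem notMem_minRatioSet_of_lt (hc : ∀ q, 0 < c q) (ha : IsGreedyCount c σ a)
    (hα : minRatio c a = minRatio c n) (h : n q < a q) : q ∉ minRatioSet c a := by
  rw [mem_minRatioSet, hα, ← (ha.div_eq_minRatio_of_lt (fun q => (hc q).le) hα h).2]
  exact (div_lt_div_of_pos_right (sub_one_lt _) (hc q)).ne'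

theorem le_of_lt_of_mem_minRatioSet (hc : ∀ q, 0 ≤ c q) (ha : IsGreedyCount c σ a)
    (hα : minRatio c a = minRatio c n) (h : n q < a q) (hq' : q' ∈ minRatioSet c a) :
    σ q ≤ σ q' := by
  refine (ha q q' (by omega)).elim (fun hlt => absurd hlt ?_) And.right
  rw [mem_minRatioSet.1 hq', hα, (ha.div_eq_minRatio_of_lt hc hα h).2]
  exact lt_irrefl _

theorem eq_of_optimal (hc : ∀ q, 0 < c q) (hσ : Function.Injective σ)
    (ha : IsGreedyCount c σ a) (hsum : ∑ q, n q = ∑ q, a q)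
    (hα_le : minRatio c a ≤ minRatio c n)
    (hcard_le : minRatio c a = minRatio c n → #(minRatioSet c n) ≤ #(minRatioSet c a))
    (htie : minRatio c a = minRatio c n → #(minRatioSet c a) = #(minRatioSet c n) →
      ¬ ∃ q q', σ q < σ q' ∧ n q < a q ∧ a q' < n q') :
    n = a := by
  have hc₀ : ∀ q, 0 ≤ c q := fun q => (hc q).le
  have hα := hα_le.antisymm (ha.minRatio_le_minRatio hc₀ hsum)
  by_contra hne
  set Qn := minRatioSet c n
  set Qa := minRatioSet c a
  set deficit : Finset ι := {q | n q < a q}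
  set surplus : Finset ι := {q | a q < n q}
  have hdeficit : 0 < #deficit := card_pos.2 <| by
    obtain ⟨q, hq⟩ := exists_lt_of_sum_eq_of_ne hsum hne
    exact ⟨q, mem_filter.2 ⟨mem_univ q, hq⟩⟩
  have hsurplus : #surplus ≤ #deficit :=
    card_filter_lt_le_card_filter_lt hsum fun q h => (ha.add_one_eq_of_lt hc hα h).symm
  have hsub : Qa \ surplus ∪ deficit ⊆ Qn := by
    intro q hq
    simp only [mem_union, mem_sdiff, mem_filter, mem_univ, true_and, deficit, surplus] at hq
    rcases lt_trichotomy (n q) (a q) with h | h | h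
    · exact ha.mem_minRatioSet_of_lt hc₀ hα h
    · rw [mem_minRatioSet, h, ← hα]
      exact mem_minRatioSet.1 (hq.resolve_right h.not_lt).1
    · exact absurd h (hq.resolve_right h.asymm).2
  have hdisj : Disjoint (Qa \ surplus) deficit := disjoint_right.2 fun q hq hqa =>
    ha.notMem_minRatioSet_of_lt hc hα (mem_filter.1 hq).2 (mem_sdiff.1 hqa).1
  have hsplit := card_sdiff_add_card_inter Qa surplus
  have hunion := card_le_card hsub
  rw [card_union_of_disjoint hdisj] at hunion
  have hinter := card_le_card (inter_subset_right : Qa ∩ surplus ⊆ surplus)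
  have hQn := hcard_le hα
  -- `#Qa ≤ #(Qa \ surplus) + #deficit ≤ #Qn ≤ #Qa`, so `#(Qa ∩ surplus) ≥ #deficit > 0`.
  obtain ⟨q', hq'⟩ := card_pos.1 (by omega : 0 < #(Qa ∩ surplus))
  obtain ⟨q, hq⟩ := card_pos.1 hdeficit
  have hq_lt : n q < a q := (mem_filter.1 hq).2
  have hq'_lt : a q' < n q' := (mem_filter.1 (mem_inter.1 hq').2).2
  have hσle := ha.le_of_lt_of_mem_minRatioSet hc₀ hα hq_lt (mem_inter.1 hq').1
  have hσne : σ q ≠ σ q' := hσ.ne fun h => by subst h; omega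
  exact htie hα (by omega) ⟨q, q', hσle.lt_of_ne hσne, hq_lt, hq'_lt⟩

end IsGreedyCount

end MinRatio

theorem count_map_eq_typeCnt {α : Type*} (type : α → Fin r) (S : Finset α) (q : Fin r) :
    Multiset.count q (S.val.map type) = typeCnt type S q := by
  simp [typeCnt, Multiset.count_map, ← filter_val, eq_comm]

theorem sum_typeCnt {α : Type*} (type : α → Fin r) (S : Finset α) :
    ∑ q, typeCnt type S q = #S :=
  (card_eq_sum_card_fiberwise fun x _ => mem_univ (type x)).symm

theorem exists_typeCnt_eq (type : V → Fin r) (a : Fin r → ℕ)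
    (ha : ∀ q, a q ≤ typeCnt type univ q) : ∃ A : Finset V, typeCnt type A = a := by
  choose B hB hBcard using fun q => exists_subset_card_eq (ha q)
  have hBtype : ∀ q, ∀ e ∈ B q, type e = q := fun q e he => (mem_filter.1 (hB q he)).2
  refine ⟨univ.biUnion B, funext fun q => ?_⟩
  rw [typeCnt, ← hBcard q]
  congr 1
  ext e
  simp only [mem_filter, mem_biUnion, mem_univ, true_and]
  constructor
  · rintro ⟨⟨q', he⟩, rfl⟩
    rwa [hBtype q' e he]
  · exact fun he => ⟨⟨q, he⟩, hBtype q e he⟩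

theorem alphaMin_of_card_eq [NeZero r] {α : Type*} {p : Fin r → ℝ} {type : α → Fin r}
    {S : Finset α} {b : ℕ} (h : #S = b) :
    alphaMin p type S = minRatio (fun q => p q * b) (typeCnt type S) := by
  subst h; rfl

theorem minTypes_of_card_eq [NeZero r] {α : Type*} {p : Fin r → ℝ} {type : α → Fin r}
    {S : Finset α} {b : ℕ} (h : #S = b) :
    minTypes p type S = minRatioSet (fun q => p q * b) (typeCnt type S) := by
  subst h; rfl

section MinRatioSeq

variable {s : ℕ → Fin r} {q : Fin r} {n : ℕ}

theorem count_ofFn_eq_seqCount (s : ℕ → Fin r) (q : Fin r) (n : ℕ) :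
    Multiset.count q ((List.ofFn fun i : Fin n => s i : List (Fin r)) : Multiset (Fin r)) =
      seqCount s q n := by
  rw [← Fin.univ_val_map, Multiset.count_map, ← filter_val, card_val, seqCount, card_filter,
    card_filter]
  simp only [eq_comm (a := q)]
  exact Fin.sum_univ_eq_sum_range (fun i => if s i = q then 1 else 0) n

theorem seqCount_succ : seqCount s q (n + 1) = seqCount s q n + if s n = q then 1 else 0 := by
  simp only [seqCount, card_filter, sum_range_succ]

theorem seqCount_mono : Monotone (seqCount s q) :=
  fun _ _ h => card_le_card (filter_subset_filter _ (range_subset_range.2 h))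

theorem seqCount_le (s : ℕ → Fin r) (q : Fin r) (n : ℕ) : seqCount s q n ≤ n :=
  (card_filter_le _ _).trans_eq (card_range n)

theorem sum_seqCount (s : ℕ → Fin r) (n : ℕ) : ∑ q, seqCount s q n = n :=
  (card_eq_sum_card_fiberwise fun i _ => mem_univ (s i)).symm.trans (card_range n)

theorem exists_lt_seqCount_add_one_eq (h : 0 < seqCount s q n) :
    ∃ m < n, s m = q ∧ seqCount s q m + 1 = seqCount s q n := by
  induction n with
  | zero => simp [seqCount] at h
  | succ n ih =>
    rw [seqCount_succ] at h ⊢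
    by_cases hsn : s n = q
    · exact ⟨n, n.lt_succ_self, hsn, by simp [hsn]⟩
    · simp only [hsn, if_false, add_zero] at h ⊢
      obtain ⟨m, hm, hsm, hcount⟩ := ih h
      exact ⟨m, by omega, hsm, hcount⟩

/-- The last occurrence of `q` before `n` was a greedy choice, and later insertions only raise
the other counts. -/
theorem IsMinRatioSeq.isGreedyCount {p : Fin r → ℝ} (hp : ∀ q, 0 ≤ p q)
    {σ : Fin r → Fin r} {d : ℕ} (hs : IsMinRatioSeq p σ d s) (n : ℕ) :
    IsGreedyCount (fun q => p q * d) σ (fun q => seqCount s q n) := by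
  intro q q' hq
  obtain ⟨m, hmn, hsm, hcount⟩ := exists_lt_seqCount_add_one_eq hq
  have hpred : (seqCount s q m : ℝ) = seqCount s q n - 1 := by
    rw [← hcount]; push_cast; ring
  have hmono : (seqCount s q' m : ℝ) / (p q' * d) ≤ seqCount s q' n / (p q' * d) :=
    div_le_div_of_nonneg_right (by exact_mod_cast seqCount_mono hmn.le)
      (mul_nonneg (hp q') d.cast_nonneg)
  have hstep := hs m q'
  rw [hsm, hpred] at hstep
  rcases hstep with hlt | ⟨heq, hσ⟩
  · exact Or.inl (hlt.trans_le hmono)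
  · rcases hmono.lt_or_eq with hlt | heq'
    · exact Or.inl (heq.trans_lt hlt)
    · exact Or.inr ⟨heq.trans heq', hσ⟩

end MinRatioSeq

theorem SigmaTypeFeasible.typeCnt_eq_seqCount [NeZero r] {p : Fin r → ℝ} (hp : ∀ q, 0 < p q)
    {type : V → Fin r} {σ : Fin r → Fin r} (hσ : Function.Injective σ) {b : ℕ}
    (havail : ∀ q, b ≤ typeCnt type univ q) {s : ℕ → Fin r} (hs : IsMinRatioSeq p σ b s)
    {T : Finset V} (hT : SigmaTypeFeasible p type σ b T) :
    typeCnt type T = fun q => seqCount s q b := by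
  obtain ⟨hTcard, hα_le, hcard_le, htie⟩ := hT
  rcases b.eq_zero_or_pos with rfl | hb
  · rw [card_eq_zero.1 hTcard]
    funext q
    simp [typeCnt, seqCount]
  obtain ⟨A, hA⟩ := exists_typeCnt_eq type (fun q => seqCount s q b)
    fun q => (seqCount_le s q b).trans (havail q)
  have hAcard : #A = b := by rw [← sum_typeCnt, hA, sum_seqCount]
  have hgreedy := hs.isGreedyCount (fun q => (hp q).le) b
  rw [← hA] at hgreedy
  have hsum : ∑ q, typeCnt type T q = ∑ q, typeCnt type A q := by
    rw [sum_typeCnt, sum_typeCnt, hTcard, hAcard]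
  have hα_le := hα_le A hAcard
  have hcard_le := hcard_le A hAcard
  have htie := htie A hAcard
  simp only [alphaMin_of_card_eq hAcard, alphaMin_of_card_eq hTcard, minTypes_of_card_eq hAcard,
    minTypes_of_card_eq hTcard] at hα_le hcard_le htie
  exact (hgreedy.eq_of_optimal (fun q => mul_pos (hp q) (by exact_mod_cast hb)) hσ hsum
    hα_le hcard_le htie).trans hA

/-- type-count characterization. For any `b`, the multiset of types of any
`σ`-type feasible selection of size `b` equals the multiset of the first `b` entries of
the min-ratio type sequence `s(b,b)`; consequently any two `σ`-type feasible selections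
of size `b` have the same multiset of types. -/
theorem sigma_type_feasible_type_multiset [NeZero r]
    (p : Fin r → ℝ) (hp : ∀ q, 0 < p q)
    (type : V → Fin r) (σ : Fin r → Fin r) (hσ : Function.Injective σ)
    (b : ℕ)
    (havail : ∀ q : Fin r, b ≤ typeCnt type (Finset.univ : Finset V) q)
    (s : ℕ → Fin r) (hs : IsMinRatioSeq p σ b s)
    (S : Finset V) (hS : SigmaTypeFeasible p type σ b S) :
    S.val.map type = ((List.ofFn (fun i : Fin b => s i) : List (Fin r)) : Multiset (Fin r)) ∧
    (∀ S' : Finset V, SigmaTypeFeasible p type σ b S' →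
      S.val.map type = S'.val.map type) := by
  have htypes : ∀ T, SigmaTypeFeasible p type σ b T →
      T.val.map type = ((List.ofFn fun i : Fin b => s i : List (Fin r)) : Multiset (Fin r)) :=
    fun T hT => Multiset.ext.2 fun q => by
      rw [count_map_eq_typeCnt, count_ofFn_eq_seqCount,
        hT.typeCnt_eq_seqCount hp hσ havail hs]
  exact ⟨htypes S hS, fun S' hS' => (htypes S hS).trans (htypes S' hS').symm⟩

end
end

section
/- Exchange bound against a restricted optimum: let f be a non-decreasing submodular function with f(∅) = 0, let OPT ⊆ V, and let W ⊆ OPT with Z = OPT \ W. If there exist k pairwise disjoint subsets Y₁,…,Y_k ⊆ Z such that g(OPT \ Y_i, Y_i) ≥ g(Z, W) for each i (where g(A,B) = f(A ∪ B) − f(A)), then f(Z) ≥ k · g(Z, W), and hence f(OPT) = f(Z) + g(Z,W) ≤ ((k+1)/k) · f(Z). -/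
open Finset

theorem set_submod_aux {V : Type*} [DecidableEq V] (f : Finset V → ℝ)
    (hmono : ∀ A B : Finset V, A ⊆ B → f A ≤ f B)
    (hsub : ∀ (A B : Finset V) (e : V), A ⊆ B → e ∉ B →
      f (insert e B) - f B ≤ f (insert e A) - f A) :
    ∀ (C A B : Finset V), A ⊆ B → f (B ∪ C) - f B ≤ f (A ∪ C) - f A := by
  intro C
  induction C using Finset.induction_on with
  | empty => intro A B hAB; simp
  | @insert e C he ih =>
    intro A B hAB
    have hAC : A ∪ C ⊆ B ∪ C := Finset.union_subset_union_left hAB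
    have h1 : f (insert e (B ∪ C)) - f (B ∪ C) ≤ f (insert e (A ∪ C)) - f (A ∪ C) := by
      by_cases heB : e ∈ B ∪ C
      · rw [Finset.insert_eq_self.2 heB]
        have := hmono (A ∪ C) (insert e (A ∪ C)) (Finset.subset_insert _ _)
        linarith
      · exact hsub _ _ e hAC heB
    have h2 := ih A B hAB
    rw [Finset.union_insert, Finset.union_insert]
    linarith

/-- exchange bound against a restricted optimum. With `Z = OPT \ W` and
`g(A,B) = f(A ∪ B) − f(A)`, if there are `k` pairwise disjoint subsets `Yᵢ ⊆ Z` with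
`g(OPT \ Yᵢ, Yᵢ) ≥ g(Z, W)` for each `i`, then `f(Z) ≥ k · g(Z,W)` and hence
`f(OPT) ≤ ((k+1)/k) · f(Z)`. -/
theorem exchange_bound_restricted_optimum
    {V : Type*} [Fintype V] [DecidableEq V]
    (f : Finset V → ℝ)
    (hmono : ∀ A B : Finset V, A ⊆ B → f A ≤ f B)
    (hsub : ∀ (A B : Finset V) (e : V), A ⊆ B → e ∉ B →
      f (insert e B) - f B ≤ f (insert e A) - f A)
    (hempty : f ∅ = 0)
    (k : ℕ) (hk : 0 < k)
    (OPT W : Finset V) (hW : W ⊆ OPT)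
    (Y : Fin k → Finset V)
    (hYdisj : ∀ i j : Fin k, i ≠ j → Disjoint (Y i) (Y j))
    (hYsub : ∀ i, Y i ⊆ OPT \ W)
    (hYg : ∀ i, f ((OPT \ W) ∪ W) - f (OPT \ W) ≤ f ((OPT \ Y i) ∪ Y i) - f (OPT \ Y i)) :
    (k : ℝ) * (f ((OPT \ W) ∪ W) - f (OPT \ W)) ≤ f (OPT \ W) ∧
    f OPT ≤ ((k : ℝ) + 1) / (k : ℝ) * f (OPT \ W) := by
  set Z := OPT \ W with hZ
  have hZW : Z ∪ W = OPT := Finset.sdiff_union_of_subset hW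
  set g := f (Z ∪ W) - f Z with hgdef
  set T : ℕ → Finset V := fun n =>
    Finset.biUnion (Finset.range n) (fun j => if h : j < k then Y ⟨j, h⟩ else ∅) with hTdef
  have key : ∀ n, n ≤ k → (n : ℝ) * g ≤ f Z - f (Z \ T n) := by
    intro n
    induction n with
    | zero => intro _; simp [hTdef]
    | succ n ih =>
      intro hn
      have hnk : n < k := hn
      have ihh := ih (le_of_lt hnk)
      have hT1 : T (n + 1) = T n ∪ Y ⟨n, hnk⟩ := by
        simp only [hTdef, Finset.range_add_one, Finset.biUnion_insert, dif_pos hnk]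
        exact Finset.union_comm _ _
      have hYnZ : Y ⟨n, hnk⟩ ⊆ Z := hYsub _
      have hdisjT : Disjoint (Y ⟨n, hnk⟩) (T n) := by
        rw [hTdef]
        rw [Finset.disjoint_biUnion_right]
        intro j hj
        rw [Finset.mem_range] at hj
        rw [dif_pos (lt_trans hj hnk)]
        exact hYdisj _ _ (by simp [Fin.ext_iff]; omega)
      have hYnZT : Y ⟨n, hnk⟩ ⊆ Z \ T n := by
        intro x hx
        rw [Finset.mem_sdiff]
        exact ⟨hYnZ hx, fun hxT => (Finset.disjoint_left.1 hdisjT) hx hxT⟩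
      have hsd : Z \ T (n + 1) = (Z \ T n) \ Y ⟨n, hnk⟩ := by
        rw [hT1]
        ext x; simp [Finset.mem_sdiff]; tauto
      have hun : (Z \ T (n + 1)) ∪ Y ⟨n, hnk⟩ = Z \ T n := by
        rw [hsd]
        exact Finset.sdiff_union_of_subset hYnZT
      have hsubset : Z \ T (n + 1) ⊆ OPT \ Y ⟨n, hnk⟩ := by
        intro x hx
        rw [hsd, Finset.mem_sdiff, Finset.mem_sdiff] at hx
        rw [Finset.mem_sdiff]
        exact ⟨Finset.sdiff_subset (hx.1.1), hx.2⟩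
      have h1 := hYg ⟨n, hnk⟩
      have h2 := set_submod_aux f hmono hsub (Y ⟨n, hnk⟩) (Z \ T (n + 1)) (OPT \ Y ⟨n, hnk⟩)
        hsubset
      rw [hun] at h2
      push_cast
      linarith
  have hkey := key k le_rfl
  have h0 : 0 ≤ f (Z \ T k) := by
    have := hmono ∅ (Z \ T k) (Finset.empty_subset _)
    linarith [hempty]
  have part1 : (k : ℝ) * g ≤ f Z := by linarith
  refine ⟨part1, ?_⟩
  have hkpos : (0 : ℝ) < k := by exact_mod_cast hk
  have hgle : g ≤ f Z / k := by
    rw [le_div_iff₀ hkpos]; linarith [part1]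
  have hOPT : f OPT = f Z + g := by rw [← hZW]; ring
  have heq : ((k : ℝ) + 1) / k * f Z = f Z + f Z / k := by
    field_simp
  rw [hOPT, heq]
  linarith
end

section
/- Tightness of the k/(k+1) ratio under σ-ordering: on a ground set partitioned into r ≥ 2 types each containing more than rk+1 elements, with objective f(S) = |S ∩ T_r| and budget b = rk+1, any selection taking exactly k elements of each type plus one extra element of type 1 (as forced by the σ-ordering preferring smaller indices) achieves objective value k, while the selection taking k elements of each type plus one extra element of type r achieves k+1; moreover f(S) = |S ∩ T_r| is non-decreasing and submodular. -/
open Finset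

/-- tightness of the `k/(k+1)` ratio under `σ`-ordering. With `r ≥ 2` types,
each containing more than `rk+1` elements, objective `f(S) = |S ∩ T_r|` and budget
`b = rk+1`: `f` is non-decreasing and submodular; any selection taking `k` elements of
each type plus one extra of type `1` achieves value `k`, while there exists a selection
taking `k` of each type plus one extra of type `r` achieving value `k+1`. -/
theorem sigma_ordering_tight
    (r k : ℕ) (hr : 2 ≤ r) (hk : 0 < k)
    {V : Type*} [Fintype V] [DecidableEq V]
    (type : V → Fin r)
    (havail : ∀ q : Fin r, r * k + 1 < (Finset.univ.filter (fun e => type e = q)).card)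
    (f : Finset V → ℝ)
    (hf : ∀ S : Finset V,
      f S = ((S.filter (fun e => type e = (⟨r - 1, by omega⟩ : Fin r))).card : ℝ)) :
    (∀ A B : Finset V, A ⊆ B → f A ≤ f B) ∧
    (∀ (A B : Finset V) (e : V), A ⊆ B → e ∉ B →
      f (insert e B) - f B ≤ f (insert e A) - f A) ∧
    (∀ S : Finset V,
      (∀ q : Fin r, (S.filter (fun e => type e = q)).card =
        k + if q = (⟨0, by omega⟩ : Fin r) then 1 else 0) →
      f S = (k : ℝ)) ∧
    (∃ S : Finset V, S.card = r * k + 1 ∧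
      (∀ q : Fin r, (S.filter (fun e => type e = q)).card =
        k + if q = (⟨r - 1, by omega⟩ : Fin r) then 1 else 0) ∧
      f S = (k : ℝ) + 1) := by
  set last : Fin r := ⟨r - 1, by omega⟩ with hlast
  refine ⟨?_, ?_, ?_, ?_⟩
  · intro A B hAB
    rw [hf, hf]
    exact_mod_cast Finset.card_le_card (Finset.filter_subset_filter _ hAB)
  · intro A B e hAB heB
    have heA : e ∉ A := fun h => heB (hAB h)
    rw [hf, hf, hf, hf, Finset.filter_insert, Finset.filter_insert]
    by_cases h : type e = last
    · rw [if_pos h, if_pos h,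
        Finset.card_insert_of_notMem (by simp [heB]),
        Finset.card_insert_of_notMem (by simp [heA])]
      push_cast; ring_nf
      exact le_refl 1
    · simp [h]
  · intro S hS
    rw [hf, hS last]
    have : last ≠ (⟨0, by omega⟩ : Fin r) := by
      simp only [hlast, Fin.ne_iff_vne]; omega
    rw [if_neg this]; simp
  · have hchoose : ∀ q : Fin r, ∃ t : Finset V,
        t ⊆ Finset.univ.filter (fun e => type e = q) ∧
        t.card = k + if q = last then 1 else 0 := by
      intro q
      apply Finset.exists_subset_card_eq
      have := havail q
      have h1 : k + (if q = last then 1 else 0) ≤ r * k + 1 := by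
        split <;> nlinarith
      omega
    choose t ht hcard using hchoose
    have hfilter : ∀ q : Fin r,
        (Finset.univ.biUnion t).filter (fun e => type e = q) = t q := by
      intro q
      ext x
      simp only [Finset.mem_filter, Finset.mem_biUnion, Finset.mem_univ, true_and]
      constructor
      · rintro ⟨⟨q', hq'⟩, hx⟩
        have := ht q' hq'
        simp only [Finset.mem_filter] at this
        rwa [this.2.symm.trans hx] at hq'
      · intro hx
        have := ht q hx
        simp only [Finset.mem_filter] at this
        exact ⟨⟨q, hx⟩, this.2⟩
    refine ⟨Finset.univ.biUnion t, ?_, fun q => (hfilter q) ▸ hcard q, ?_⟩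
    · rw [Finset.card_eq_sum_card_fiberwise (f := type)
        (t := Finset.univ) (fun x _ => Finset.mem_univ _)]
      have : ∀ q ∈ (Finset.univ : Finset (Fin r)),
          ((Finset.univ.biUnion t).filter (fun e => type e = q)).card
            = k + if q = last then 1 else 0 := fun q _ => (hfilter q) ▸ hcard q
      rw [Finset.sum_congr rfl this, Finset.sum_add_distrib,
        Finset.sum_ite_eq' Finset.univ last (fun _ => 1)]
      simp [mul_comm]
    · rw [hf, hfilter last, hcard last, if_pos rfl]
      push_cast; ring
end

section
/- Learning-augmented guarantee (single step): with OPT an optimal size-b selection and A an advice set of size b, for each i ∈ {0,…,b} let A_i ⊆ A with |A_i| = i and let B_i be a greedy completion of size b − i maximizing marginal gain over f(· ∪ A_i). Then the best of the resulting sets U_i = A_i ⊎ B_i satisfies f(U) ≥ max_{i ∈ {0,…,b}} [ f(A_i) + (1 − 1/e)/⌈|OPT \ A_i|/(b−i)⌉ · (f(OPT ∪ A_i) − f(A_i)) ], assuming the classical greedy guarantee f(B_i ∪ A_i) − f(A_i) ≥ (1 − 1/e)·(f(OPT'_i ∪ A_i) − f(A_i)) where OPT'_i is the optimal size-(b−i)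 completion of A_i. -/
/-!
Split `OPT \ A_i` into `⌈|OPT \ A_i| / (b - i)⌉` blocks of at most `b - i` elements. By
submodularity the gain of `OPT` over `A_i` is at most the sum of the gains of the blocks, hence at
most `⌈|OPT \ A_i| / (b - i)⌉` times the gain of the best block. That block, padded to exactly
`b - i` elements outside `A_i`, is a competitor of the greedy completion `B_i`.
-/

open Finset

section

variable {V : Type*} [DecidableEq V]

def HasDiminishingReturns (f : Finset V → ℝ) : Prop :=
  ∀ (A B : Finset V) (e : V), A ⊆ B → e ∉ B → f (insert e B) - f B ≤ f (insert e A) - f A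

theorem HasDiminishingReturns.union_sub_le {f : Finset V → ℝ} (hmono : Monotone f)
    (hsub : HasDiminishingReturns f) (X : Finset V) {A B : Finset V} (hAB : A ⊆ B) :
    f (X ∪ B) - f B ≤ f (X ∪ A) - f A := by
  induction X using Finset.induction_on with
  | empty => simp
  | @insert e X _ ih =>
    have hstep : f (insert e (X ∪ B)) - f (X ∪ B) ≤ f (insert e (X ∪ A)) - f (X ∪ A) := by
      by_cases he : e ∈ X ∪ B
      · rw [insert_eq_self.2 he, sub_self, sub_nonneg]
        exact hmono (subset_insert _ _)
      · exact hsub _ _ e (union_subset_union_right hAB) he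
    rw [insert_union, insert_union]
    linarith

/-- A set of at most `m * k` elements is covered by `m` blocks of at most `k` elements, and its
gain over `C` is at most the sum of their gains. -/
theorem exists_subset_card_le_gain_le_mul {f : Finset V → ℝ} (hmono : Monotone f)
    (hsub : HasDiminishingReturns f) (C : Finset V) {k : ℕ} (m : ℕ) {S : Finset V}
    (hS : #S ≤ m * k) : ∃ P ⊆ S, #P ≤ k ∧ f (S ∪ C) - f C ≤ m * (f (P ∪ C) - f C) := by
  induction m generalizing S with
  | zero =>
    obtain rfl : S = ∅ := card_eq_zero.1 (by simpa using hS)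
    exact ⟨∅, empty_subset _, by simp, by simp⟩
  | succ m ih =>
    obtain ⟨P₀, hP₀S, hP₀card⟩ := exists_subset_card_eq (min_le_right k #S)
    have hrest : #(S \ P₀) ≤ m * k := by
      rw [card_sdiff_of_subset hP₀S, hP₀card]
      rw [Nat.succ_mul] at hS
      omega
    obtain ⟨P, hPS, hPcard, hP⟩ := ih hrest
    have hsplit : f (S ∪ C) - f (S \ P₀ ∪ C) ≤ f (P₀ ∪ C) - f C := by
      have hunion : S ∪ C = P₀ ∪ (S \ P₀ ∪ C) := by
        rw [← union_assoc, union_sdiff_of_subset hP₀S]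
      rw [hunion]
      exact hsub.union_sub_le hmono P₀ subset_union_right
    have hgain : 0 ≤ f (P ∪ C) - f C := sub_nonneg.2 (hmono subset_union_right)
    push_cast
    rcases le_total (f (P₀ ∪ C)) (f (P ∪ C)) with hle | hle
    · exact ⟨P, hPS.trans sdiff_subset, hPcard, by nlinarith⟩
    · exact ⟨P₀, hP₀S, hP₀card ▸ min_le_left _ _, by nlinarith⟩

theorem exists_subset_card_le_gain_le_ceil_mul {f : Finset V → ℝ} (hmono : Monotone f)
    (hsub : HasDiminishingReturns f) (C S : Finset V) {k : ℕ} (hk : 0 < k) :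
    ∃ P ⊆ S, #P ≤ k ∧
      f (S ∪ C) - f C ≤ (⌈(#S : ℝ) / (k : ℝ)⌉ : ℝ) * (f (P ∪ C) - f C) := by
  have hnonneg : (0 : ℝ) ≤ (#S : ℝ) / k := by positivity
  have hcover : #S ≤ ⌈(#S : ℝ) / k⌉₊ * k := by
    have := Nat.le_ceil ((#S : ℝ) / k)
    rw [div_le_iff₀ (by positivity)] at this
    exact_mod_cast this
  rw [← natCast_ceil_eq_intCast_ceil hnonneg]
  exact exists_subset_card_le_gain_le_mul hmono hsub C _ hcover

theorem exists_disjoint_superset_card_eq {P B C : Finset V} (hP : Disjoint P C)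
    (hB : Disjoint B C) (hcard : #P ≤ #B) :
    ∃ Z, P ⊆ Z ∧ Disjoint Z C ∧ #Z = #B := by
  obtain ⟨Z, hPZ, hZ, hZcard⟩ :=
    exists_subsuperset_card_eq (subset_union_left (s₂ := B)) hcard
      (card_le_card subset_union_right)
  exact ⟨Z, hPZ, disjoint_of_subset_left hZ (disjoint_union_left.2 ⟨hP, hB⟩), hZcard⟩

theorem div_mul_le_of_le_mul {a c x y z : ℝ} (ha : 0 ≤ a) (hc : 0 ≤ c) (hz : 0 ≤ z)
    (hx : x ≤ c * y) (hy : a * y ≤ z) : a / c * x ≤ z := by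
  rcases hc.eq_or_lt with rfl | hc
  · simpa using hz
  · calc a / c * x ≤ a / c * (c * y) := mul_le_mul_of_nonneg_left hx (by positivity)
      _ = a * y := by field_simp
      _ ≤ z := hy

theorem one_sub_inv_exp_one_nonneg : 0 ≤ 1 - 1 / Real.exp 1 := by
  rw [sub_nonneg, div_le_one (Real.exp_pos 1)]
  exact Real.one_le_exp zero_le_one

end

theorem learning_augmented_single_step_general
    {V : Type*} [DecidableEq V]
    (f : Finset V → ℝ)
    (hmono : ∀ A B : Finset V, A ⊆ B → f A ≤ f B)
    (hsub : ∀ (A B : Finset V) (e : V), A ⊆ B → e ∉ B →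
      f (insert e B) - f B ≤ f (insert e A) - f A)
    (b : ℕ)
    (OPT A : Finset V)
    (As Bs : Fin (b + 1) → Finset V)
    (hBdisj : ∀ i, Disjoint (Bs i) (As i))
    (hBcard : ∀ i : Fin (b + 1), (Bs i).card = b - (i : ℕ))
    (hgreedy : ∀ i : Fin (b + 1), ∀ Z : Finset V, Disjoint Z (As i) →
      Z.card = b - (i : ℕ) →
      (1 - 1 / Real.exp 1) * (f (Z ∪ As i) - f (As i)) ≤ f (As i ∪ Bs i) - f (As i))
    (U : Finset V)
    (hUmax : ∀ i, f (As i ∪ Bs i) ≤ f U) :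
    ∀ i : Fin (b + 1),
      f (As i) + (1 - 1 / Real.exp 1) /
          (⌈((OPT \ As i).card : ℝ) / ((b - (i : ℕ) : ℕ) : ℝ)⌉ : ℝ) *
          (f (OPT ∪ As i) - f (As i)) ≤ f U := by
  intro i
  have hf : Monotone f := fun A B h => hmono A B h
  have hgain : 0 ≤ f (As i ∪ Bs i) - f (As i) := sub_nonneg.2 (hf subset_union_left)
  suffices (1 - 1 / Real.exp 1) /
      (⌈((OPT \ As i).card : ℝ) / ((b - (i : ℕ) : ℕ) : ℝ)⌉ : ℝ) *
      (f (OPT ∪ As i) - f (As i)) ≤ f (As i ∪ Bs i) - f (As i) by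
    linarith [hUmax i]
  rcases Nat.eq_zero_or_pos (b - (i : ℕ)) with hk | hk
  · -- `⌈x / 0⌉ = 0`, and division by zero is zero
    simpa [hk] using hgain
  obtain ⟨P, hPS, hPcard, hP⟩ :=
    exists_subset_card_le_gain_le_ceil_mul hf hsub (As i) (OPT \ As i) hk
  obtain ⟨Z, hPZ, hZdisj, hZcard⟩ := exists_disjoint_superset_card_eq
    (disjoint_of_subset_left hPS sdiff_disjoint) (hBdisj i) (hBcard i ▸ hPcard)
  rw [sdiff_union_self_eq_union] at hP
  refine div_mul_le_of_le_mul one_sub_inv_exp_one_nonneg (by positivity) hgain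
    (hP.trans ?_) (hgreedy i Z hZdisj (hZcard.trans (hBcard i)))
  gcongr
  exact hf (union_subset_union_left hPZ)

/-- learning-augmented single-step guarantee. With `OPT` an optimal
size-`b` selection, advice `A` of size `b`, nested-size subsets `A_i ⊆ A` with
`|A_i| = i`, and greedy completions `B_i` of size `b − i` satisfying the classical
`(1 − 1/e)` greedy guarantee against any size-`(b−i)` completion, the best set `U` among
the `U_i = A_i ⊎ B_i` satisfies, for every `i`,
`f(U) ≥ f(A_i) + (1 − 1/e)/⌈|OPT \ A_i|/(b−i)⌉ · (f(OPT ∪ A_i) − f(A_i))`. -/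
theorem learning_augmented_single_step
    {V : Type*} [Fintype V] [DecidableEq V]
    (f : Finset V → ℝ)
    (hmono : ∀ A B : Finset V, A ⊆ B → f A ≤ f B)
    (hsub : ∀ (A B : Finset V) (e : V), A ⊆ B → e ∉ B →
      f (insert e B) - f B ≤ f (insert e A) - f A)
    (b : ℕ) (hb : 0 < b)
    (OPT A : Finset V) (hOPTcard : OPT.card = b) (hAcard : A.card = b)
    (hOPTopt : ∀ T : Finset V, T.card ≤ b → f T ≤ f OPT)
    (As Bs : Fin (b + 1) → Finset V)
    (hAsub : ∀ i, As i ⊆ A) (hAscard : ∀ i : Fin (b + 1), (As i).card = i)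
    (hBdisj : ∀ i, Disjoint (Bs i) (As i))
    (hBcard : ∀ i : Fin (b + 1), (Bs i).card = b - (i : ℕ))
    (hne : ∀ i : Fin (b + 1), (i : ℕ) < b → (OPT \ As i).Nonempty)
    (hgreedy : ∀ i : Fin (b + 1), ∀ Z : Finset V, Disjoint Z (As i) →
      Z.card = b - (i : ℕ) →
      (1 - 1 / Real.exp 1) * (f (Z ∪ As i) - f (As i)) ≤ f (As i ∪ Bs i) - f (As i))
    (U : Finset V) (hUmem : ∃ i, U = As i ∪ Bs i)
    (hUmax : ∀ i, f (As i ∪ Bs i) ≤ f U) :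
    ∀ i : Fin (b + 1),
      f (As i) + (1 - 1 / Real.exp 1) /
          (⌈((OPT \ As i).card : ℝ) / ((b - (i : ℕ) : ℕ) : ℝ)⌉ : ℝ) *
          (f (OPT ∪ As i) - f (As i)) ≤ f U :=
  learning_augmented_single_step_general f hmono hsub b OPT A As Bs hBdisj hBcard hgreedy U hUmax
end

section
/- Type-decomposable extension bound: suppose f decomposes additively across types, i.e., f(S) = Σ_{q=1}^r f_q(S ∩ T_q) where each f_q is non-decreasing submodular with f_q(∅) = 0. Fix quota x_q for each type and sets OPT, A with |OPT ∩ T_q| = |A ∩ T_q| = x_q. For any A' ⊆ A, if for each q there is B_q ⊆ (OPT \ A') ∩ T_q of size x_q − |A' ∩ T_q| maximizing f_q((· ∪ A') ∩ T_q), then f(OPT ∪ A') − f(A') ≤ (max_{q} ⌈|(OPT \ A') ∩ T_q| / (x_q − |A' ∩ T_q|)⌉) · (f(B ∪ A') − f(A')) where B = ⋃_q B_q. -/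
open Finset

private lemma submod_union_diff {V : Type*} [DecidableEq V] (g : Finset V → ℝ)
    (hmono : ∀ A B : Finset V, A ⊆ B → g A ≤ g B)
    (hsub : ∀ (A B : Finset V) (e : V), A ⊆ B → e ∉ B →
      g (insert e B) - g B ≤ g (insert e A) - g A) :
    ∀ (S A B : Finset V), A ⊆ B → g (S ∪ B) - g B ≤ g (S ∪ A) - g A := by
  intro S
  induction S using Finset.induction_on with
  | empty => intro A B h; simp
  | @insert e S he ih =>
    intro A B hAB
    rw [insert_union, insert_union]
    by_cases heB : e ∈ B
    · rw [Finset.insert_eq_of_mem (mem_union_right _ heB)]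
      have h1 := ih A B hAB
      have h2 := hmono _ _ (subset_insert e (S ∪ A))
      linarith
    · have heSB : e ∉ S ∪ B := by
        simp only [mem_union]
        rintro (h | h)
        exacts [he h, heB h]
      have h1 := hsub (S ∪ A) (S ∪ B) e (union_subset_union_right hAB) heSB
      have h2 := ih A B hAB
      linarith

private lemma chunk_bound {V : Type*} [DecidableEq V] (g : Finset V → ℝ)
    (hmono : ∀ A B : Finset V, A ⊆ B → g A ≤ g B)
    (hsub : ∀ (A B : Finset V) (e : V), A ⊆ B → e ∉ B →
      g (insert e B) - g B ≤ g (insert e A) - g A)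
    (C N : Finset V) (k : ℕ) (W : ℝ)
    (hW : 0 ≤ W)
    (hkN : k ≤ N.card)
    (hZ : ∀ Z ⊆ N, Z.card = k → g (Z ∪ C) - g C ≤ W) :
    ∀ m : ℕ, ∀ S ⊆ N, S.card ≤ m * k → g (S ∪ C) - g C ≤ m * W := by
  intro m
  induction m with
  | zero =>
    intro S hS hcard
    have : S = ∅ := card_eq_zero.1 (Nat.le_zero.1 (by simpa using hcard))
    subst this; simp
  | succ m ih =>
    intro S hSN hcard
    by_cases hle : S.card ≤ k
    · obtain ⟨Z, hSZ, hZN, hZcard⟩ := Finset.exists_subsuperset_card_eq hSN hle hkN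
      have h1 : g (S ∪ C) ≤ g (Z ∪ C) := hmono _ _ (union_subset_union_left hSZ)
      have h2 := hZ Z hZN hZcard
      have h3 : (1:ℝ) * W ≤ ((m:ℝ)+1) * W := by
        apply mul_le_mul_of_nonneg_right _ hW
        have : (0:ℝ) ≤ (m:ℝ) := Nat.cast_nonneg m
        linarith
      push_cast
      linarith
    · obtain ⟨P, hPS, hPcard⟩ := Finset.exists_subset_card_eq
        (le_of_lt (lt_of_not_ge hle) : k ≤ S.card)
      have hunion : P ∪ (S \ P ∪ C) = S ∪ C := by
        rw [← union_assoc, Finset.union_sdiff_of_subset hPS]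
      have h1 : g (P ∪ (S \ P ∪ C)) - g (S \ P ∪ C) ≤ g (P ∪ C) - g C :=
        submod_union_diff g hmono hsub P C (S \ P ∪ C) (subset_union_right)
      rw [hunion] at h1
      have h2 : g (S \ P ∪ C) - g C ≤ m * W := by
        apply ih (S \ P) ((sdiff_subset).trans hSN)
        have hc : (S \ P).card = S.card - k := by rw [card_sdiff_of_subset hPS, hPcard]
        have h4 := Nat.sub_le_sub_right hcard k
        rw [Nat.succ_mul, Nat.add_sub_cancel] at h4
        omega
      have h3 := hZ P (hPS.trans hSN) hPcard
      push_cast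
      linarith


/-- type-decomposable extension bound. Suppose
`f(S) = Σ_q f_q(S ∩ T_q)` with each `f_q` non-decreasing submodular and `f_q(∅) = 0`.
With quotas `x_q`, sets `OPT`, `A` having exactly `x_q` elements of each type,
`A' ⊆ A`, and per-type maximizers `B_q ⊆ (OPT \ A') ∩ T_q` of size
`x_q − |A' ∩ T_q|`, one has, with `B = ⋃_q B_q`:
`f(OPT ∪ A') − f(A') ≤ (max_q ⌈|(OPT \ A') ∩ T_q|/(x_q − |A' ∩ T_q|)⌉)·(f(B ∪ A') − f(A'))`. -/
theorem type_decomposable_extension_bound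
    (r : ℕ) [NeZero r]
    {V : Type*} [Fintype V] [DecidableEq V]
    (type : V → Fin r)
    (fq : Fin r → Finset V → ℝ)
    (hmono : ∀ q, ∀ A B : Finset V, A ⊆ B → fq q A ≤ fq q B)
    (hsub : ∀ q, ∀ (A B : Finset V) (e : V), A ⊆ B → e ∉ B →
      fq q (insert e B) - fq q B ≤ fq q (insert e A) - fq q A)
    (hempty : ∀ q, fq q ∅ = 0)
    (f : Finset V → ℝ)
    (hf : ∀ S : Finset V, f S = ∑ q : Fin r, fq q (S.filter (fun e => type e = q)))
    (x : Fin r → ℕ) (OPT A A' : Finset V)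
    (hOPT : ∀ q, (OPT.filter (fun e => type e = q)).card = x q)
    (hA : ∀ q, (A.filter (fun e => type e = q)).card = x q)
    (hA' : A' ⊆ A)
    (hx : ∀ q, ((OPT \ A').filter (fun e => type e = q)).Nonempty →
      1 ≤ x q - (A'.filter (fun e => type e = q)).card)
    (B : Fin r → Finset V)
    (hBsub : ∀ q, B q ⊆ (OPT \ A').filter (fun e => type e = q))
    (hBcard : ∀ q, (B q).card = x q - (A'.filter (fun e => type e = q)).card)
    (hBmax : ∀ q, ∀ Z ⊆ (OPT \ A').filter (fun e => type e = q),
      Z.card = x q - (A'.filter (fun e => type e = q)).card →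
      fq q ((Z ∪ A').filter (fun e => type e = q)) ≤
        fq q ((B q ∪ A').filter (fun e => type e = q))) :
    f (OPT ∪ A') - f A' ≤
      (Finset.univ.sup' Finset.univ_nonempty (fun q : Fin r =>
        (⌈(((OPT \ A').filter (fun e => type e = q)).card : ℝ) /
          ((x q - (A'.filter (fun e => type e = q)).card : ℕ) : ℝ)⌉ : ℝ))) *
      (f (Finset.univ.biUnion B ∪ A') - f A') := by
  classical
  set N : Fin r → Finset V := fun q => (OPT \ A').filter (fun e => type e = q) with hN
  set A'' : Fin r → Finset V := fun q => A'.filter (fun e => type e = q) with hA''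
  set k : Fin r → ℕ := fun q => x q - (A'' q).card with hk
  set c : Fin r → ℝ := fun q => (⌈((N q).card : ℝ) / ((k q : ℕ) : ℝ)⌉ : ℝ) with hc
  set W : Fin r → ℝ := fun q => fq q (B q ∪ A'' q) - fq q (A'' q) with hWdef
  set M : ℝ := Finset.univ.sup' Finset.univ_nonempty c with hM
  -- filter identities
  have hfil1 : ∀ q : Fin r, (OPT ∪ A').filter (fun e => type e = q) = N q ∪ A'' q := by
    intro q
    rw [← Finset.sdiff_union_self_eq_union, Finset.filter_union]
  have hBtype : ∀ q : Fin r, ∀ e ∈ B q, type e = q := by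
    intro q e he
    exact (Finset.mem_filter.1 (hBsub q he)).2
  have hfil2 : ∀ q : Fin r,
      (Finset.univ.biUnion B ∪ A').filter (fun e => type e = q) = B q ∪ A'' q := by
    intro q
    rw [Finset.filter_union]
    congr 1
    ext e
    simp only [Finset.mem_filter, Finset.mem_biUnion, Finset.mem_univ, true_and]
    constructor
    · rintro ⟨⟨q', hq'⟩, ht⟩
      have := hBtype q' e hq'
      rw [ht] at this
      rwa [← this] at hq'
    · intro he
      exact ⟨⟨q, he⟩, hBtype q e he⟩
  have hfil3 : ∀ q : Fin r, ∀ Z ⊆ N q,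
      (Z ∪ A').filter (fun e => type e = q) = Z ∪ A'' q := by
    intro q Z hZ
    rw [Finset.filter_union]
    congr 1
    apply Finset.filter_eq_self.2
    intro e he
    exact (Finset.mem_filter.1 (hZ he)).2
  have hW0 : ∀ q, 0 ≤ W q := by
    intro q
    have := hmono q _ _ (Finset.subset_union_right : A'' q ⊆ B q ∪ A'' q)
    simp only [hWdef]; linarith
  have hkN : ∀ q, k q ≤ (N q).card := by
    intro q
    have h1 : OPT.filter (fun e => type e = q) ⊆ N q ∪ A'' q := by
      intro e he
      rw [← hfil1 q]
      exact Finset.filter_subset_filter _ (Finset.subset_union_left) he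
    have h2 := (Finset.card_le_card h1).trans (Finset.card_union_le _ _)
    rw [hOPT q] at h2
    simp only [hk]
    omega
  -- key per-type hypothesis for chunk_bound
  have hZkey : ∀ q, ∀ Z ⊆ N q, Z.card = k q →
      fq q (Z ∪ A'' q) - fq q (A'' q) ≤ W q := by
    intro q Z hZ hZc
    have := hBmax q Z hZ hZc
    rw [hfil3 q Z hZ, hfil3 q (B q) (hBsub q)] at this
    simp only [hWdef]
    linarith
  -- per-type bound
  have hmain : ∀ q : Fin r,
      fq q (N q ∪ A'' q) - fq q (A'' q) ≤ c q * W q := by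
    intro q
    rcases Finset.eq_empty_or_nonempty (N q) with hne | hne
    · rw [hne]
      simp only [Finset.empty_union, sub_self, hc, hne, Finset.card_empty,
        Nat.cast_zero, zero_div, Int.ceil_zero, Int.cast_zero, zero_mul, le_refl]
    · have hk1 : 1 ≤ k q := hx q hne
      have hkpos : (0:ℝ) < (k q : ℝ) := by exact_mod_cast hk1
      set m : ℕ := (⌈((N q).card : ℝ) / ((k q) : ℝ)⌉).toNat with hm
      have hceil_nonneg : (0:ℤ) ≤ ⌈((N q).card : ℝ) / ((k q) : ℝ)⌉ :=
        Int.ceil_nonneg (div_nonneg (Nat.cast_nonneg _) hkpos.le)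
      have hmc : (m : ℝ) = c q := by
        simp only [hc, hm]
        exact_mod_cast congrArg (fun z : ℤ => (z : ℝ)) (Int.toNat_of_nonneg hceil_nonneg)
      have hcard : (N q).card ≤ m * k q := by
        have h1 : ((N q).card : ℝ) / ((k q) : ℝ) ≤ (m : ℝ) := by
          rw [hmc]; exact Int.le_ceil _
        rw [div_le_iff₀ hkpos] at h1
        have : ((N q).card : ℝ) ≤ ((m * k q : ℕ) : ℝ) := by push_cast; linarith
        exact_mod_cast this
      have := chunk_bound (fq q) (hmono q) (hsub q) (A'' q) (N q) (k q) (W q)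
        (hW0 q) (hkN q) (hZkey q) m (N q) (Finset.Subset.refl _) hcard
      rw [hmc] at this
      exact this
  -- assemble
  have hcM : ∀ q : Fin r, c q ≤ M := fun q => Finset.le_sup' c (Finset.mem_univ q)
  have hL : f (OPT ∪ A') - f A' =
      ∑ q : Fin r, (fq q (N q ∪ A'' q) - fq q (A'' q)) := by
    rw [hf, hf, ← Finset.sum_sub_distrib]
    exact Finset.sum_congr rfl fun q _ => by rw [hfil1 q]
  have hR : f (Finset.univ.biUnion B ∪ A') - f A' = ∑ q : Fin r, W q := by
    rw [hf, hf, ← Finset.sum_sub_distrib]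
    exact Finset.sum_congr rfl fun q _ => by rw [hfil2 q]
  rw [hL, hR, Finset.mul_sum]
  apply Finset.sum_le_sum
  intro q _
  calc fq q (N q ∪ A'' q) - fq q (A'' q) ≤ c q * W q := hmain q
    _ ≤ M * W q := mul_le_mul_of_nonneg_right (hcM q) (hW0 q)
end

section
/- Monotone submodular greedy over a single partition matroid achieves a 1/2-approximation: if S is the output of the greedy algorithm that repeatedly adds the feasible element of maximum marginal gain subject to a partition matroid M = (V, I) with I = {S : |S ∩ V_q| ≤ x_q for all q}, until no feasible element remains, then f(S) ≥ (1/2)·max{f(T) : T ∈ I} for any non-decreasing submodular f with f(∅) = 0. -/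
open Finset

/-- The set of elements selected in the first `i` steps of a greedy run `e`. -/
def greedyPrefix {V : Type*} [DecidableEq V] {m : ℕ} (e : Fin m → V) (i : Fin m) :
    Finset V :=
  (Finset.univ.filter (fun j => j < i)).image e

/-- Submodular expansion: the gain of adding a whole set is at most the sum of
individual marginal gains. -/
lemma submod_expand {V : Type*} [DecidableEq V] (f : Finset V → ℝ)
    (hsub : ∀ (A B : Finset V) (e : V), A ⊆ B → e ∉ B →
      f (insert e B) - f B ≤ f (insert e A) - f A)
    (A : Finset V) (T : Finset V) :
    f (A ∪ T) - f A ≤ ∑ v ∈ T \ A, (f (insert v A) - f A) := by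
  induction T using Finset.induction with
  | empty => simp
  | @insert a T ha ih =>
    by_cases hA : a ∈ A
    · have h1 : A ∪ insert a T = A ∪ T := by
        rw [Finset.union_insert, Finset.insert_eq_self.2 (Finset.mem_union_left T hA)]
      have h2 : insert a T \ A = T \ A := by
        rw [Finset.insert_sdiff_of_mem _ hA]
      rw [h1, h2]; exact ih
    · have haT : a ∉ A ∪ T := by simp [hA, ha]
      have h1 : A ∪ insert a T = insert a (A ∪ T) := by
        rw [Finset.union_insert]
      have h2 : insert a T \ A = insert a (T \ A) := by
        rw [Finset.insert_sdiff_of_notMem _ hA]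
      have h3 : a ∉ T \ A := fun h => ha (Finset.mem_sdiff.1 h).1
      rw [h1, h2, Finset.sum_insert h3]
      have h4 := hsub A (A ∪ T) a Finset.subset_union_left haT
      linarith

/-- greedy for a monotone submodular function over a single partition
matroid is a 1/2-approximation. If `S` is the output of the greedy algorithm that
repeatedly adds a feasible element of maximum marginal gain (subject to the partition
matroid `|S ∩ V_q| ≤ x_q`) until no feasible element remains, then
`f(S) ≥ (1/2)·f(T)` for every independent `T`. -/
theorem greedy_partition_matroid_half_approx
    (r : ℕ) {V : Type*} [Fintype V] [DecidableEq V]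
    (part : V → Fin r) (x : Fin r → ℕ)
    (Ind : Finset V → Prop)
    (hInd : ∀ S : Finset V, Ind S ↔ ∀ q, (S.filter (fun e => part e = q)).card ≤ x q)
    (f : Finset V → ℝ)
    (hmono : ∀ A B : Finset V, A ⊆ B → f A ≤ f B)
    (hsub : ∀ (A B : Finset V) (e : V), A ⊆ B → e ∉ B →
      f (insert e B) - f B ≤ f (insert e A) - f A)
    (hempty : f ∅ = 0)
    (m : ℕ) (e : Fin m → V) (hinj : Function.Injective e)
    (S : Finset V) (hS : S = Finset.univ.image e)
    (hnew : ∀ i : Fin m, e i ∉ greedyPrefix e i)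
    (hfeas : ∀ i : Fin m, Ind (insert (e i) (greedyPrefix e i)))
    (hgreedy : ∀ i : Fin m, ∀ v : V, v ∉ greedyPrefix e i →
      Ind (insert v (greedyPrefix e i)) →
      f (insert v (greedyPrefix e i)) - f (greedyPrefix e i) ≤
        f (insert (e i) (greedyPrefix e i)) - f (greedyPrefix e i))
    (hterm : ∀ v : V, v ∉ S → ¬ Ind (insert v S)) :
    ∀ T : Finset V, Ind T → (1 / 2 : ℝ) * f T ≤ f S := by
  intro T hT
  set g : Fin m → ℝ := fun i => f (insert (e i) (greedyPrefix e i)) - f (greedyPrefix e i)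
    with hg
  -- every prefix is contained in S
  have hpS : ∀ i : Fin m, greedyPrefix e i ⊆ S := by
    intro i
    rw [hS, greedyPrefix]
    exact Finset.image_subset_image (Finset.subset_univ _)
  -- gains are nonnegative
  have hg0 : ∀ i, 0 ≤ g i := fun i =>
    sub_nonneg.2 (hmono _ _ (Finset.subset_insert _ _))
  -- the auxiliary prefix indexed by natural numbers
  set F : ℕ → Finset V := fun k => (Finset.univ.filter (fun j : Fin m => j.val < k)).image e
    with hF
  have hFP : ∀ i : Fin m, greedyPrefix e i = F i.val := by
    intro i
    simp only [greedyPrefix, hF, Fin.lt_def]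
  -- telescoping sum
  have htel : ∀ k : ℕ, k ≤ m →
      f (F k) = ∑ i ∈ Finset.univ.filter (fun i : Fin m => i.val < k), g i := by
    intro k
    induction k with
    | zero =>
      intro _
      have : F 0 = ∅ := by simp [hF]
      simp [this, hempty]
    | succ k ih =>
      intro hk1
      have hk : k < m := hk1
      set ik : Fin m := ⟨k, hk⟩ with hik
      have hfilt : (Finset.univ.filter (fun i : Fin m => i.val < k + 1)) =
          insert ik (Finset.univ.filter (fun i : Fin m => i.val < k)) := by
        ext j
        simp only [Finset.mem_filter, Finset.mem_insert, Finset.mem_univ, true_and]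
        constructor
        · intro h
          rcases Nat.lt_succ_iff_lt_or_eq.1 h with h | h
          · exact Or.inr h
          · exact Or.inl (Fin.ext h)
        · rintro (h | h)
          · rw [h]; exact Nat.lt_succ_self k
          · exact Nat.lt_succ_of_lt h
      have hiknot : ik ∉ Finset.univ.filter (fun i : Fin m => i.val < k) := by
        simp [hik]
      have hFsucc : F (k + 1) = insert (e ik) (F k) := by
        rw [hF]
        simp only
        rw [hfilt, Finset.image_insert]
      have hPk : greedyPrefix e ik = F k := hFP ik
      rw [hFsucc, hfilt, Finset.sum_insert hiknot, ← ih (Nat.le_of_lt hk)]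
      have : g ik = f (insert (e ik) (F k)) - f (F k) := by
        show f (insert (e ik) (greedyPrefix e ik)) - f (greedyPrefix e ik) = _
        rw [hPk]
      linarith [this]
  have hSF : S = F m := by
    rw [hS, hF]
    show _ = (Finset.univ.filter (fun j : Fin m => j.val < m)).image e
    rw [Finset.filter_true_of_mem (fun i _ => i.isLt)]
  have htelS : f S = ∑ i, g i := by
    rw [hSF, htel m le_rfl]
    congr 1
    rw [Finset.filter_true_of_mem (fun i _ => i.isLt)]
  -- S is independent
  have hIndS : Ind S := by
    rcases Nat.eq_zero_or_pos m with hm | hm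
    · subst hm
      have : S = ∅ := by rw [hS]; simp
      rw [this, hInd]
      intro q; simp
    · set last : Fin m := ⟨m - 1, by omega⟩ with hlast
      have hsub' : S ⊆ insert (e last) (greedyPrefix e last) := by
        intro v hv
        rw [hS] at hv
        obtain ⟨j, _, rfl⟩ := Finset.mem_image.1 hv
        by_cases hj : j = last
        · rw [hj]; exact Finset.mem_insert_self _ _
        · apply Finset.mem_insert_of_mem
          rw [greedyPrefix]
          apply Finset.mem_image_of_mem
          simp only [Finset.mem_filter, Finset.mem_univ, true_and, Fin.lt_def]
          have h1 : j.val ≤ m - 1 := by omega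
          have h2 : j.val ≠ m - 1 := fun h => hj (Fin.ext h)
          show j.val < m - 1
          omega
      rw [hInd]
      intro q
      have := (hInd _).1 (hfeas last) q
      exact le_trans (Finset.card_le_card (Finset.filter_subset_filter _ hsub')) this
  -- key per-element bound
  have hkey : ∀ v ∈ T \ S, ∀ i : Fin m, part (e i) = part v →
      f (insert v S) - f S ≤ g i := by
    intro v hv i hpi
    have hvS : v ∉ S := (Finset.mem_sdiff.1 hv).2
    have hvP : v ∉ greedyPrefix e i := fun h => hvS (hpS i h)
    have hIndins : Ind (insert v (greedyPrefix e i)) := by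
      rw [hInd]
      intro q
      have h1 := (hInd _).1 (hfeas i) q
      refine le_trans ?_ h1
      rw [Finset.filter_insert, Finset.filter_insert]
      by_cases hq : part v = q
      · rw [if_pos hq, if_pos (hpi.trans hq)]
        rw [Finset.card_insert_of_notMem (fun h => hvP (Finset.mem_filter.1 h).1),
          Finset.card_insert_of_notMem (fun h => hnew i (Finset.mem_filter.1 h).1)]
      · rw [if_neg hq, if_neg (fun h => hq (hpi ▸ h))]
    have h2 := hgreedy i v hvP hIndins
    have h3 := hsub (greedyPrefix e i) S v (hpS i) hvS
    show _ ≤ f (insert (e i) (greedyPrefix e i)) - f (greedyPrefix e i)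
    linarith
  -- the main summation bound
  have hsum : ∑ v ∈ T \ S, (f (insert v S) - f S) ≤ ∑ i, g i := by
    rw [← Finset.sum_fiberwise (T \ S) part (fun v => f (insert v S) - f S),
      ← Finset.sum_fiberwise Finset.univ (fun i => part (e i)) g]
    apply Finset.sum_le_sum
    intro q _
    set Tq := (T \ S).filter (fun v => part v = q) with hTq
    set Stepsq := Finset.univ.filter (fun i : Fin m => part (e i) = q) with hStepsq
    rcases Finset.eq_empty_or_nonempty Tq with hTqe | ⟨v₀, hv₀⟩
    · rw [hTqe]
      simp only [Finset.sum_empty]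
      exact Finset.sum_nonneg (fun i _ => hg0 i)
    · have hv₀m := Finset.mem_filter.1 hv₀
      have hv₀TS := hv₀m.1
      have hv₀q : part v₀ = q := hv₀m.2
      have hv₀S : v₀ ∉ S := (Finset.mem_sdiff.1 hv₀TS).2
      -- tightness: x q ≤ |S ∩ V_q|
      have htight : x q ≤ (S.filter (fun v => part v = q)).card := by
        have hni := hterm v₀ hv₀S
        rw [hInd] at hni
        push_neg at hni
        obtain ⟨q', hq'⟩ := hni
        have hq'eq : q' = q := by
          by_contra hne
          have : (insert v₀ S).filter (fun v => part v = q') = S.filter (fun v => part v = q') := by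
            rw [Finset.filter_insert, if_neg (fun h => hne (h.symm.trans hv₀q))]
          rw [this] at hq'
          exact absurd ((hInd S).1 hIndS q') (not_le.2 hq')
        subst hq'eq
        have : (insert v₀ S).filter (fun v => part v = q') =
            insert v₀ (S.filter (fun v => part v = q')) := by
          rw [Finset.filter_insert, if_pos hv₀q]
        rw [this, Finset.card_insert_of_notMem
          (fun h => hv₀S (Finset.mem_filter.1 h).1)] at hq'
        omega
      -- |Steps_q| = |S ∩ V_q|
      have hstepscard : Stepsq.card = (S.filter (fun v => part v = q)).card := by
        have himg : (S.filter (fun v => part v = q)) = Stepsq.image e := by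
          rw [hS, Finset.filter_image]
        rw [himg, Finset.card_image_of_injective _ hinj]
      -- |T_q| ≤ x q
      have hTqcard : Tq.card ≤ x q := by
        have hsub' : Tq ⊆ T.filter (fun v => part v = q) := by
          apply Finset.filter_subset_filter
          exact Finset.sdiff_subset
        calc Tq.card ≤ (T.filter (fun v => part v = q)).card := Finset.card_le_card hsub'
          _ ≤ x q := (hInd T).1 hT q
      have hne : Stepsq.Nonempty := by
        rw [← Finset.card_pos, hstepscard]
        have : 1 ≤ Tq.card := Finset.card_pos.2 ⟨v₀, hv₀⟩
        omega
      obtain ⟨i₀, hi₀m, hi₀min⟩ := Finset.exists_min_image Stepsq g hne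
      have hi₀q : part (e i₀) = q := (Finset.mem_filter.1 hi₀m).2
      have step1 : ∑ v ∈ Tq, (f (insert v S) - f S) ≤ Tq.card • g i₀ := by
        rw [← Finset.sum_const]
        apply Finset.sum_le_sum
        intro v hv
        have hvm := Finset.mem_filter.1 hv
        exact hkey v hvm.1 i₀ (hi₀q.trans hvm.2.symm)
      have hgi₀ : 0 ≤ g i₀ := hg0 i₀
      have step2 : (Tq.card : ℝ) * g i₀ ≤ (Stepsq.card : ℝ) * g i₀ := by
        apply mul_le_mul_of_nonneg_right _ hgi₀
        have : Tq.card ≤ Stepsq.card := by omega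
        exact_mod_cast this
      have step3 : Stepsq.card • g i₀ ≤ ∑ i ∈ Stepsq, g i :=
        Finset.card_nsmul_le_sum Stepsq g (g i₀) hi₀min
      rw [nsmul_eq_mul] at step1
      rw [nsmul_eq_mul] at step3
      calc ∑ v ∈ Tq, (f (insert v S) - f S) ≤ (Tq.card : ℝ) * g i₀ := step1
        _ ≤ (Stepsq.card : ℝ) * g i₀ := step2
        _ ≤ ∑ i ∈ Stepsq, g i := step3
  -- conclude
  have hexp := submod_expand f hsub S T
  have hTle : f T ≤ f (S ∪ T) := hmono _ _ Finset.subset_union_right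
  linarith [htelS, hsum]
end
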